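/- arXiv:1308.5588 — 3 statements merged into one kernel-verified Lean document; each statement's English description precedes it below -/
import Mathlib

section
/- Gauss summation formula: let a, b, c be complex numbers such that c is not a nonpositive integer and Re(c − a − b) > 0. Then the Gauss hypergeometric series converges at x = 1 and F(a, b; c; 1) = ∑_{n=0}^∞ (a)_n (b)_n / ((c)_n n!) = Γ(c) Γ(c − a − b) / (Γ(c − a) Γ(c − b)). -/
/-!
By Euler's limit formula `Γ(s) = lim n^s n! / (s)_(n+1)`, the term `t_n` of `F(a, b; c; 1)`
behaves like `Γ(c) / (Γ(a) Γ(b)) · n^(a+b-c-1)`, so when `Re (c - a - b) > 0` the series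
converges and `n t_n → 0`. Summing the termwise contiguous relation, whose right side
telescopes, gives `c (c - a - b) F(c) = (c - a) (c - b) F(c + 1)`; iterating,
`F(c) = (c - a)_m (c - b)_m / ((c)_m (c - a - b)_m) · F(c + m)`. As `m → ∞`, `F(c + m) → 1` by
dominated convergence, and Euler's formula turns the Pochhammer ratio into
`Γ(c) Γ(c - a - b) / (Γ(c - a) Γ(c - b))`.
-/

/-- The general term of the Gauss hypergeometric series `F(a, b; c; x)`:
`((a)_n (b)_n) / ((c)_n n!) * x ^ n`, where `(q)_n` is the Pochhammer symbol
(rising factorial). -/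
noncomputable def gaussHypTerm (a b c x : ℂ) (n : ℕ) : ℂ :=
  (ascPochhammer ℂ n).eval a * (ascPochhammer ℂ n).eval b /
    ((ascPochhammer ℂ n).eval c * (n.factorial : ℂ)) * x ^ n

open Filter Finset Topology Asymptotics
open scoped Nat

theorem ascPochhammer_eval_eq_prod_range {R : Type*} [CommSemiring R] (r : R) (n : ℕ) :
    (ascPochhammer R n).eval r = ∏ j ∈ range n, (r + j) := by
  induction n with
  | zero => simp
  | succ n ih => rw [ascPochhammer_succ_eval, ih, prod_range_succ]

theorem mul_ascPochhammer_eval_add_one {R : Type*} [CommSemiring R] (r : R) (n : ℕ) :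
    r * (ascPochhammer R n).eval (r + 1) = (ascPochhammer R n).eval r * (r + n) := by
  rw [← ascPochhammer_succ_eval, ascPochhammer_succ_left]
  simp

theorem ascPochhammer_eval_ne_zero {s : ℂ} (hs : ∀ k : ℕ, s ≠ -k) (n : ℕ) :
    (ascPochhammer ℂ n).eval s ≠ 0 := by
  rw [Ne, ascPochhammer_eval_eq_zero_iff]
  rintro ⟨k, -, hk⟩
  exact hs k (by rw [hk, neg_neg])

theorem ne_neg_natCast_of_re_pos {s : ℂ} (hs : 0 < s.re) (k : ℕ) : s ≠ -k := by
  rintro rfl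
  simp only [Complex.neg_re, Complex.natCast_re, Left.neg_pos_iff] at hs
  exact k.cast_nonneg.not_gt hs

theorem eventually_add_natCast_ne_zero (s : ℂ) : ∀ᶠ n : ℕ in atTop, s + n ≠ 0 :=
  ((tendsto_const_add_cobounded s).comp tendsto_natCast_atTop_cobounded).eventually_ne_cobounded 0

theorem tendsto_add_natCast_div_add_natCast (u w : ℂ) :
    Tendsto (fun n : ℕ => (u + n) / (w + n)) atTop (𝓝 1) := by
  simpa using tendsto_add_mul_div_add_mul_atTop_nhds u w 1 one_ne_zero

namespace Complex

theorem GammaSeq_eq_div_ascPochhammer (s : ℂ) (n : ℕ) :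
    GammaSeq s n = n ^ s * n ! / ((ascPochhammer ℂ n).eval s * (s + n)) := by
  rw [GammaSeq, ← ascPochhammer_eval_eq_prod_range, ascPochhammer_succ_eval]

/-- At a pole `s = -k` Mathlib's `Gamma s` is `0`, and so is `(GammaSeq s n)⁻¹` once `n > k`. -/
theorem tendsto_GammaSeq_inv (s : ℂ) :
    Tendsto (fun n => (GammaSeq s n)⁻¹) atTop (𝓝 (Gamma s)⁻¹) := by
  by_cases hs : ∀ k : ℕ, s ≠ -k
  · exact (GammaSeq_tendsto_Gamma s).inv₀ (Gamma_ne_zero hs)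
  push Not at hs
  obtain ⟨k, rfl⟩ := hs
  rw [Gamma_neg_nat_eq_zero, inv_zero]
  refine tendsto_const_nhds.congr' ?_
  filter_upwards [eventually_gt_atTop k] with n hn
  rw [GammaSeq_eq_div_ascPochhammer,
    (ascPochhammer_eval_eq_zero_iff _ _).2 ⟨k, hn, (neg_neg _).symm⟩]
  simp

theorem tendsto_ascPochhammer_ratio_mul_cpow (s t u v : ℂ) :
    Tendsto (fun n : ℕ => (ascPochhammer ℂ n).eval s * (ascPochhammer ℂ n).eval t /
        ((ascPochhammer ℂ n).eval u * (ascPochhammer ℂ n).eval v) * (n : ℂ) ^ (u + v - s - t))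
      atTop (𝓝 (Gamma u * Gamma v / (Gamma s * Gamma t))) := by
  have hGamma := (((GammaSeq_tendsto_Gamma u).mul (GammaSeq_tendsto_Gamma v)).mul
    ((tendsto_GammaSeq_inv s).mul (tendsto_GammaSeq_inv t))).mul
    ((tendsto_add_natCast_div_add_natCast u s).mul (tendsto_add_natCast_div_add_natCast v t))
  rw [mul_one, mul_one, ← mul_inv, ← div_eq_mul_inv] at hGamma
  refine hGamma.congr' ?_
  filter_upwards [eventually_ne_atTop 0, eventually_add_natCast_ne_zero s,
    eventually_add_natCast_ne_zero t, eventually_add_natCast_ne_zero u,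
    eventually_add_natCast_ne_zero v] with n hn hs ht hu hv
  have hn' : (n : ℂ) ≠ 0 := Nat.cast_ne_zero.2 hn
  have hpow : (n : ℂ) ^ (u + v - s - t) = n ^ u * n ^ v / (n ^ s * n ^ t) := by
    rw [cpow_sub _ _ hn', cpow_sub _ _ hn', cpow_add _ _ hn', div_div]
  have hns : (n : ℂ) ^ s ≠ 0 := cpow_ne_zero_iff.2 (Or.inl hn')
  have hnt : (n : ℂ) ^ t ≠ 0 := cpow_ne_zero_iff.2 (Or.inl hn')
  have hfac : ((n ! : ℕ) : ℂ) ≠ 0 := Nat.cast_ne_zero.2 n.factorial_ne_zero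
  simp only [GammaSeq_eq_div_ascPochhammer, hpow]
  field_simp

end Complex

theorem gaussHypTerm_one_eq (a b c : ℂ) (n : ℕ) :
    gaussHypTerm a b c 1 n = (ascPochhammer ℂ n).eval a * (ascPochhammer ℂ n).eval b /
      ((ascPochhammer ℂ n).eval c * (ascPochhammer ℂ n).eval 1) := by
  rw [gaussHypTerm, one_pow, mul_one, ascPochhammer_eval_one]

theorem tendsto_gaussHypTerm_one_mul_cpow (a b c : ℂ) :
    Tendsto (fun n : ℕ => gaussHypTerm a b c 1 n * (n : ℂ) ^ (c + 1 - a - b)) atTop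
      (𝓝 (Complex.Gamma c / (Complex.Gamma a * Complex.Gamma b))) := by
  simpa [gaussHypTerm_one_eq] using Complex.tendsto_ascPochhammer_ratio_mul_cpow a b c 1

theorem isBigO_gaussHypTerm_one (a b c : ℂ) :
    gaussHypTerm a b c 1 =O[atTop] fun n : ℕ => (n : ℝ) ^ (-(c - a - b).re - 1) := by
  have hpow : (fun n : ℕ => (n : ℂ) ^ (-(c + 1 - a - b))) =O[atTop]
      fun n : ℕ => (n : ℝ) ^ (-(c - a - b).re - 1) := by
    refine IsBigO.of_bound 1 ?_
    filter_upwards [eventually_gt_atTop 0] with n hn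
    rw [Complex.norm_natCast_cpow_of_pos hn, Real.norm_of_nonneg (by positivity), one_mul]
    apply le_of_eq
    congr 1
    simp only [Complex.neg_re, Complex.sub_re, Complex.add_re, Complex.one_re]
    ring
  refine (((tendsto_gaussHypTerm_one_mul_cpow a b c).isBigO_one ℝ).mul hpow).congr' ?_ (by simp)
  filter_upwards [eventually_ne_atTop 0] with n hn
  rw [mul_assoc, ← Complex.cpow_add _ _ (Nat.cast_ne_zero.2 hn), add_neg_cancel,
    Complex.cpow_zero, mul_one]

theorem summable_gaussHypTerm_one {a b c : ℂ} (hre : 0 < (c - a - b).re) :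
    Summable (gaussHypTerm a b c 1) :=
  summable_of_isBigO_nat (Real.summable_nat_rpow.2 (by linarith)) (isBigO_gaussHypTerm_one a b c)

theorem tendsto_natCast_mul_gaussHypTerm_one {a b c : ℂ} (hre : 0 < (c - a - b).re) :
    Tendsto (fun n : ℕ => n * gaussHypTerm a b c 1 n) atTop (𝓝 0) := by
  have hid : (fun n : ℕ => (n : ℂ)) =O[atTop] fun n : ℕ => (n : ℝ) :=
    isBigO_of_le _ fun n => by simp
  refine ((hid.mul (isBigO_gaussHypTerm_one a b c)).trans_eventuallyEq ?_).trans_tendsto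
    ((tendsto_rpow_neg_atTop hre).comp tendsto_natCast_atTop_atTop)
  filter_upwards [eventually_ne_atTop 0] with n hn
  rw [Function.comp_apply, ← sub_add_cancel (-(c - a - b).re) 1,
    Real.rpow_add_one (Nat.cast_ne_zero.2 hn), add_sub_cancel_right, mul_comm]

theorem gaussHypTerm_one_contiguous (a b : ℂ) {c : ℂ} (hc : ∀ k : ℕ, c ≠ -k) (n : ℕ) :
    c * (c - a - b) * gaussHypTerm a b c 1 n - (c - a) * (c - b) * gaussHypTerm a b (c + 1) 1 n =
      n * c * gaussHypTerm a b c 1 n - (n + 1) * c * gaussHypTerm a b c 1 (n + 1) := by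
  have hc0 : c ≠ 0 := by simpa using hc 0
  have hcn : c + n ≠ 0 := fun h => hc n (eq_neg_of_add_eq_zero_left h)
  have hPc := ascPochhammer_eval_ne_zero hc n
  have hshift : (ascPochhammer ℂ n).eval (c + 1) = (ascPochhammer ℂ n).eval c * (c + n) / c := by
    rw [← mul_ascPochhammer_eval_add_one, mul_div_cancel_left₀ _ hc0]
  simp only [gaussHypTerm, one_pow, mul_one, ascPochhammer_succ_eval, hshift, Nat.factorial_succ,
    Nat.cast_mul, Nat.cast_add, Nat.cast_one]
  field_simp
  ring

theorem re_add_natCast_sub_sub_pos {a b c : ℂ} (hre : 0 < (c - a - b).re) (m : ℕ) :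
    0 < (c + m - a - b).re := by
  simp only [Complex.sub_re, Complex.add_re, Complex.natCast_re] at hre ⊢
  linarith [m.cast_nonneg (α := ℝ)]

theorem tsum_gaussHypTerm_one_contiguous {a b c : ℂ} (hc : ∀ k : ℕ, c ≠ -k)
    (hre : 0 < (c - a - b).re) :
    c * (c - a - b) * ∑' n, gaussHypTerm a b c 1 n =
      (c - a) * (c - b) * ∑' n, gaussHypTerm a b (c + 1) 1 n := by
  have hre₁ : 0 < (c + 1 - a - b).re := by simpa using re_add_natCast_sub_sub_pos hre 1
  have hsum := ((summable_gaussHypTerm_one hre).hasSum.mul_left (c * (c - a - b))).sub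
    ((summable_gaussHypTerm_one hre₁).hasSum.mul_left ((c - a) * (c - b)))
  have htelescope : Tendsto (fun N => ∑ n ∈ range N, (c * (c - a - b) * gaussHypTerm a b c 1 n -
      (c - a) * (c - b) * gaussHypTerm a b (c + 1) 1 n)) atTop (𝓝 0) := by
    have := (tendsto_natCast_mul_gaussHypTerm_one hre).const_mul (-c)
    rw [mul_zero] at this
    refine this.congr fun N => ?_
    simp only [gaussHypTerm_one_contiguous a b hc, ← Nat.cast_succ]
    rw [sum_range_sub' (fun n : ℕ => n * c * gaussHypTerm a b c 1 n), Nat.cast_zero, zero_mul,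
      zero_mul]
    ring
  exact sub_eq_zero.1 (tendsto_nhds_unique hsum.tendsto_sum_nat htelescope)

theorem ascPochhammer_mul_tsum_gaussHypTerm_one {a b c : ℂ} (hc : ∀ k : ℕ, c ≠ -k)
    (hre : 0 < (c - a - b).re) (m : ℕ) :
    (ascPochhammer ℂ m).eval c * (ascPochhammer ℂ m).eval (c - a - b) *
        ∑' n, gaussHypTerm a b c 1 n =
      (ascPochhammer ℂ m).eval (c - a) * (ascPochhammer ℂ m).eval (c - b) *
        ∑' n, gaussHypTerm a b (c + m) 1 n := by
  induction m with
  | zero => simp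
  | succ m ih =>
    have hcm : ∀ k : ℕ, c + m ≠ -k := fun k h => hc (k + m) (by push_cast; linear_combination h)
    have hstep := tsum_gaussHypTerm_one_contiguous hcm (re_add_natCast_sub_sub_pos hre m)
    simp only [ascPochhammer_succ_eval, Nat.cast_succ, ← add_assoc]
    linear_combination ((c + m) * (c - a - b + m)) * ih +
      (ascPochhammer ℂ m).eval (c - a) * (ascPochhammer ℂ m).eval (c - b) * hstep

theorem tendsto_gaussHypTerm_one_add_natCast (a b c : ℂ) {n : ℕ} (hn : n ≠ 0) :
    Tendsto (fun m : ℕ => gaussHypTerm a b (c + m) 1 n) atTop (𝓝 0) := by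
  have hinv : ∀ x : ℂ, Tendsto (fun m : ℕ => (x + m)⁻¹) atTop (𝓝 0) := fun x =>
    tendsto_inv₀_cobounded.comp
      ((tendsto_const_add_cobounded x).comp tendsto_natCast_atTop_cobounded)
  have hprod : Tendsto (fun m : ℕ => ((ascPochhammer ℂ n).eval (c + m))⁻¹) atTop (𝓝 0) := by
    have := tendsto_finsetProd (range n) fun j _ => hinv (c + j)
    rw [prod_const, card_range, zero_pow hn] at this
    refine this.congr fun m => ?_
    simp only [ascPochhammer_eval_eq_prod_range, ← prod_inv_distrib, add_right_comm c]
  have := hprod.const_mul ((ascPochhammer ℂ n).eval a * (ascPochhammer ℂ n).eval b / n !)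
  rw [mul_zero] at this
  refine this.congr fun m => ?_
  rw [gaussHypTerm, one_pow, mul_one]
  ring

theorem norm_gaussHypTerm_one_le {a b c a' b' c' : ℂ} (ha : ∀ j : ℕ, ‖a + j‖ ≤ ‖a' + j‖)
    (hb : ∀ j : ℕ, ‖b + j‖ ≤ ‖b' + j‖) (hc : ∀ j : ℕ, 0 < ‖c' + j‖ ∧ ‖c' + j‖ ≤ ‖c + j‖)
    (n : ℕ) : ‖gaussHypTerm a b c 1 n‖ ≤ ‖gaussHypTerm a' b' c' 1 n‖ := by
  simp only [gaussHypTerm, one_pow, mul_one, norm_div, norm_mul, ascPochhammer_eval_eq_prod_range,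
    norm_prod]
  gcongr
  exacts [mul_pos (prod_pos fun j _ => (hc j).1)
    (norm_pos_iff.2 (Nat.cast_ne_zero.2 n.factorial_ne_zero)), ha _, hb _, (hc _).2]

theorem tendsto_tsum_gaussHypTerm_one_add_natCast (a b c : ℂ) :
    Tendsto (fun m : ℕ => ∑' n, gaussHypTerm a b (c + m) 1 n) atTop (𝓝 1) := by
  have hnorm : ∀ (r : ℝ), 0 ≤ r → ∀ j : ℕ, ‖(r : ℂ) + j‖ = r + j := fun r hr j => by
    rw [← Complex.ofReal_natCast, ← Complex.ofReal_add, Complex.norm_of_nonneg (by positivity)]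
  have hnorm' : ∀ j : ℕ, ‖(‖a‖ + ‖b‖ + 1 : ℂ) + j‖ = ‖a‖ + ‖b‖ + 1 + j := fun j => by
    exact_mod_cast hnorm (‖a‖ + ‖b‖ + 1) (by positivity) j
  set T : ℕ → ℂ := gaussHypTerm ‖a‖ ‖b‖ (‖a‖ + ‖b‖ + 1) 1
  have hdom : Summable fun n => ‖T n‖ := by
    refine (summable_gaussHypTerm_one ?_).norm
    rw [show (‖a‖ + ‖b‖ + 1 - ‖a‖ - ‖b‖ : ℂ) = 1 by ring]
    simp
  obtain ⟨m₀, hm₀⟩ := exists_nat_ge (‖c‖ + ‖a‖ + ‖b‖ + 1)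
  have hbound : ∀ᶠ m : ℕ in atTop, ∀ n, ‖gaussHypTerm a b (c + m) 1 n‖ ≤ ‖T n‖ := by
    filter_upwards [eventually_ge_atTop m₀] with m hm
    refine norm_gaussHypTerm_one_le (fun j => ?_) (fun j => ?_) (fun j => ⟨?_, ?_⟩)
    · rw [hnorm _ (norm_nonneg a)]
      exact (norm_add_le _ _).trans_eq (by simp)
    · rw [hnorm _ (norm_nonneg b)]
      exact (norm_add_le _ _).trans_eq (by simp)
    · rw [hnorm']
      positivity
    · rw [hnorm']
      have hmj : (m + j : ℝ) ≤ ‖c + m + j‖ + ‖c‖ := by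
        calc (m + j : ℝ) = ‖(c + m + j) - c‖ := by
              rw [add_assoc, add_sub_cancel_left]
              exact_mod_cast (Complex.norm_natCast (m + j)).symm
          _ ≤ ‖c + m + j‖ + ‖c‖ := norm_sub_le _ _
      have : (m₀ : ℝ) ≤ m := by exact_mod_cast hm
      linarith
  have hlim := tendsto_tsum_of_dominated_convergence (g := fun n => if n = 0 then 1 else 0) hdom
    (fun n => ?_) hbound
  · rwa [tsum_ite_eq] at hlim
  rcases eq_or_ne n 0 with rfl | hn
  · simp [gaussHypTerm]
  · simpa [hn] using tendsto_gaussHypTerm_one_add_natCast a b c hn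

/-- Gauss summation formula: if `c` is not a nonpositive integer and
`Re (c - a - b) > 0`, then the hypergeometric series converges at `x = 1` with sum
`Γ(c) Γ(c - a - b) / (Γ(c - a) Γ(c - b))`. -/
theorem gauss_summation (a b c : ℂ) (hc : ∀ n : ℕ, c ≠ -(n : ℂ))
    (hre : 0 < (c - a - b).re) :
    HasSum (gaussHypTerm a b c 1)
      (Complex.Gamma c * Complex.Gamma (c - a - b) /
        (Complex.Gamma (c - a) * Complex.Gamma (c - b))) := by
  have hlim := (Complex.tendsto_ascPochhammer_ratio_mul_cpow (c - a) (c - b) c (c - a - b)).mul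
    (tendsto_tsum_gaussHypTerm_one_add_natCast a b c)
  have hexp : c + (c - a - b) - (c - a) - (c - b) = 0 := by ring
  simp only [hexp, Complex.cpow_zero, mul_one] at hlim
  have hconst : ∀ m : ℕ, (ascPochhammer ℂ m).eval (c - a) * (ascPochhammer ℂ m).eval (c - b) /
      ((ascPochhammer ℂ m).eval c * (ascPochhammer ℂ m).eval (c - a - b)) *
        ∑' n, gaussHypTerm a b (c + m) 1 n = ∑' n, gaussHypTerm a b c 1 n := fun m => by
    rw [div_mul_eq_mul_div, ← ascPochhammer_mul_tsum_gaussHypTerm_one hc hre,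
      mul_div_cancel_left₀ _ (mul_ne_zero (ascPochhammer_eval_ne_zero hc m)
        (ascPochhammer_eval_ne_zero (ne_neg_natCast_of_re_pos hre) m))]
  simp only [hconst] at hlim
  rw [tendsto_nhds_unique hlim tendsto_const_nhds]
  exact (summable_gaussHypTerm_one hre).hasSum
end

section
/- For every complex number a, F(a, 1 − a; 1/2; 3/4) = 2 sin((4a + 1)π/6), where the left-hand side is the convergent Gauss hypergeometric series at x = 3/4. -/
/-!
Let `K = 2a - 1` and let `c n` be the coefficients of `F(a, 1 - a; 1/2; x)`, so that
`c (n + 1) (2n + 2)(2n + 1) = c n ((2n + 1)² - K²)`; this recurrence alone keeps `c` bounded.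
For `|θ| < π/2` the function `H θ = ∑ c n cos θ sin^(2n) θ = cos θ · F(a, 1 - a; 1/2; sin² θ)`
differentiates term by term to the odd series `∑ (c (n+1) (2n+2) - c n (2n+1)) sin^(2n+1) θ`,
which by the recurrence differentiates term by term to `-K² H`. Hence `H'' = -K² H`, `H 0 = 1`,
`H' 0 = 0`, and so `H θ = cos (K θ)`. Evaluate at `θ = π/3`, where `sin² θ = 3/4` and
`cos θ = 1/2`, and use `cos x = sin (x + π/2)`.
-/

open Set Complex

theorem gaussHypTerm_eq_mul_pow (a b c x : ℂ) (n : ℕ) :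
    gaussHypTerm a b c x n = gaussHypTerm a b c 1 n * x ^ n := by
  simp [gaussHypTerm]

theorem gaussHypTerm_succ_mul {a b c : ℂ} (hc : ∀ k : ℕ, c + k ≠ 0) (x : ℂ) (n : ℕ) :
    gaussHypTerm a b c x (n + 1) * ((c + n) * (n + 1)) =
      gaussHypTerm a b c x n * ((a + n) * (b + n) * x) := by
  have hpoch : (ascPochhammer ℂ n).eval c ≠ 0 := by
    rw [Ne, ascPochhammer_eval_eq_zero_iff]
    rintro ⟨k, -, hk⟩
    exact hc k (by rw [hk]; ring)
  have hn : (n : ℂ) + 1 ≠ 0 := by exact_mod_cast n.succ_ne_zero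
  simp only [gaussHypTerm, ascPochhammer_succ_eval, Nat.factorial_succ, Nat.cast_mul, pow_succ]
  field_simp [hc n, n.factorial_ne_zero]
  push_cast
  ring

theorem exists_norm_le_of_succ_mul_eq {K : ℂ} {c : ℕ → ℂ}
    (hc : ∀ n : ℕ, c (n + 1) * ((2 * n + 2) * (2 * n + 1)) = c n * ((2 * n + 1) ^ 2 - K ^ 2)) :
    ∃ C, ∀ n, ‖c n‖ ≤ C := by
  have step : ∀ n : ℕ, ‖K‖ ^ 2 ≤ 2 * n + 1 → ‖c (n + 1)‖ ≤ ‖c n‖ := fun n hn => by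
    have hnorm := congrArg norm (hc n)
    have hden : ‖(2 * (n : ℂ) + 2) * (2 * n + 1)‖ = (2 * n + 2) * (2 * n + 1) := by
      exact_mod_cast Complex.norm_natCast ((2 * n + 2) * (2 * n + 1))
    have hnum : ‖(2 * (n : ℂ) + 1) ^ 2 - K ^ 2‖ ≤ (2 * n + 1) ^ 2 + ‖K‖ ^ 2 := by
      refine (norm_sub_le _ _).trans ?_
      rw [norm_pow, norm_pow]
      gcongr
      exact_mod_cast (Complex.norm_natCast (2 * n + 1)).le
    rw [norm_mul, hden, norm_mul] at hnorm
    have : ‖c (n + 1)‖ * ((2 * n + 2) * (2 * n + 1)) ≤ ‖c n‖ * ((2 * n + 2) * (2 * n + 1)) := by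
      rw [hnorm]
      gcongr
      nlinarith
    exact le_of_mul_le_mul_right this (by positivity)
  set N := ⌈‖K‖ ^ 2⌉₊
  refine ⟨∑ k ∈ Finset.range (N + 1), ‖c k‖, fun n => ?_⟩
  have hN : ‖c N‖ ≤ ∑ k ∈ Finset.range (N + 1), ‖c k‖ :=
    Finset.single_le_sum (fun k _ => norm_nonneg (c k)) (Finset.self_mem_range_succ N)
  rcases le_total n N with hn | hn
  · exact Finset.single_le_sum (fun k _ => norm_nonneg (c k)) (Finset.mem_range_succ_iff.mpr hn)
  · refine le_trans ?_ hN
    induction n, hn using Nat.le_induction with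
    | base => exact le_rfl
    | succ m hm ih =>
      refine (step m ?_).trans ih
      have : ‖K‖ ^ 2 ≤ N := Nat.le_ceil _
      have : (N : ℝ) ≤ m := by exact_mod_cast hm
      linarith

theorem hasDerivAt_cos_mul_ofReal (K : ℂ) (x : ℝ) :
    HasDerivAt (fun t : ℝ => cos (K * t)) (-K * sin (K * x)) x := by
  have h := ((hasDerivAt_id (x : ℂ)).const_mul K).ccos
  simpa [mul_comm] using h.comp_ofReal

theorem hasDerivAt_sin_mul_ofReal (K : ℂ) (x : ℝ) :
    HasDerivAt (fun t : ℝ => sin (K * t)) (K * cos (K * x)) x := by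
  have h := ((hasDerivAt_id (x : ℂ)).const_mul K).csin
  simpa [mul_comm] using h.comp_ofReal

theorem IsOpen.eqOn_mul_cos_of_hasDerivAt {s : Set ℝ} (hs : IsOpen s) (hs' : IsPreconnected s)
    (h0 : (0 : ℝ) ∈ s) {K : ℂ} {f f' : ℝ → ℂ} (hf : ∀ x ∈ s, HasDerivAt f (f' x) x)
    (hf' : ∀ x ∈ s, HasDerivAt f' (-K ^ 2 * f x) x) (hf'0 : f' 0 = 0) :
    EqOn f (fun x => f 0 * cos (K * x)) s := by
  have const : ∀ F : ℝ → ℂ, (∀ x ∈ s, HasDerivAt F 0 x) → ∀ x ∈ s, F x = F 0 := fun F hF x hx =>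
    hs.is_const_of_deriv_eq_zero hs' (fun y hy => (hF y hy).differentiableAt.differentiableWithinAt)
      (fun y hy => (hF y hy).deriv) hx h0
  -- `A` and `B` are the two Wronskians of `f` against `cos (K x)` and `sin (K x)`.
  set A : ℝ → ℂ := fun x => f' x * cos (K * x) + K * f x * sin (K * x)
  set B : ℝ → ℂ := fun x => f' x * sin (K * x) - K * f x * cos (K * x)
  have hA : ∀ x ∈ s, A x = 0 := by
    refine fun x hx => (const A (fun y hy => ?_) x hx).trans (by simp [A, hf'0])
    exact (((hf' y hy).mul (hasDerivAt_cos_mul_ofReal K y)).add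
      (((hf y hy).const_mul K).mul (hasDerivAt_sin_mul_ofReal K y))).congr_deriv (by ring)
  have hB : ∀ x ∈ s, B x = -K * f 0 := by
    refine fun x hx => (const B (fun y hy => ?_) x hx).trans (by simp [B, hf'0])
    exact (((hf' y hy).mul (hasDerivAt_sin_mul_ofReal K y)).sub
      (((hf y hy).const_mul K).mul (hasDerivAt_cos_mul_ofReal K y))).congr_deriv (by ring)
  have hf'_eq : ∀ x ∈ s, f' x = -K * f 0 * sin (K * x) := fun x hx => by
    have hW : f' x = A x * cos (K * x) + B x * sin (K * x) := by
      simp only [A, B]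
      linear_combination (-f' x) * (sin_sq_add_cos_sq (K * x))
    rw [hW, hA x hx, hB x hx]
    ring
  refine hs.eqOn_of_deriv_eq hs' (fun x hx => (hf x hx).differentiableAt.differentiableWithinAt)
    (fun x _ => ((hasDerivAt_cos_mul_ofReal K x).const_mul (f 0)).differentiableAt
      |>.differentiableWithinAt) (fun x hx => ?_) h0 (by simp)
  rw [(hf x hx).deriv, ((hasDerivAt_cos_mul_ofReal K x).const_mul (f 0)).deriv, hf'_eq x hx]
  ring

theorem summable_mul_succ_mul_geometric {q : ℝ} (hq0 : 0 ≤ q) (hq1 : q < 1) (B : ℝ) :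
    Summable fun n : ℕ => B * ((n : ℝ) + 1) * q ^ n := by
  have hq : ‖q‖ < 1 := by rwa [Real.norm_of_nonneg hq0]
  refine (((summable_pow_mul_geometric_of_norm_lt_one 1 hq).add
    (summable_geometric_of_norm_lt_one hq)).mul_left B).congr fun n => ?_
  ring

variable {r t : ℝ}

theorem sin_nonneg_lt_one_of_mem_Ioo (hr : r < Real.pi / 2) (ht : t ∈ Ioo (-r) r) :
    0 ≤ Real.sin r ∧ Real.sin r < 1 := by
  have hr0 : 0 < r := by linarith [ht.1, ht.2]
  refine ⟨Real.sin_nonneg_of_nonneg_of_le_pi hr0.le (by linarith [Real.pi_pos]), ?_⟩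
  simpa using Real.sin_lt_sin_of_lt_of_le_pi_div_two (by linarith) le_rfl hr

theorem norm_sin_pow_le (hr : r < Real.pi / 2) (ht : t ∈ Ioo (-r) r) {m n : ℕ} (hnm : n ≤ m) :
    ‖sin (t : ℂ)‖ ^ m ≤ Real.sin r ^ n := by
  obtain ⟨hq0, hq1⟩ := sin_nonneg_lt_one_of_mem_Ioo hr ht
  have habs : |t| < r := abs_lt.mpr ht
  have hsin : ‖sin (t : ℂ)‖ ≤ Real.sin r := by
    rw [← ofReal_sin, norm_real, Real.norm_eq_abs,
      Real.abs_sin_eq_sin_abs_of_abs_le_pi (by linarith [Real.pi_pos])]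
    exact Real.sin_le_sin_of_le_of_le_pi_div_two (by linarith [abs_nonneg t]) hr.le habs.le
  exact (pow_le_pow_left₀ (norm_nonneg _) hsin m).trans (pow_le_pow_of_le_one hq0 hq1.le hnm)

theorem norm_mul_sin_pow_le {b : ℂ} {B : ℝ} (hb : ‖b‖ ≤ B) (hr : r < Real.pi / 2)
    (ht : t ∈ Ioo (-r) r) {m n : ℕ} (hnm : n ≤ m) :
    ‖b * sin (t : ℂ) ^ m‖ ≤ B * Real.sin r ^ n := by
  rw [norm_mul, norm_pow]
  exact mul_le_mul hb (norm_sin_pow_le hr ht hnm) (by positivity) ((norm_nonneg b).trans hb)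

theorem hasDerivAt_sin_pow_succ (m : ℕ) (t : ℝ) :
    HasDerivAt (fun t : ℝ => sin (t : ℂ) ^ (m + 1))
      ((m + 1) * sin (t : ℂ) ^ m * cos (t : ℂ)) t := by
  have h := ((hasDerivAt_sin (t : ℂ)).pow (m + 1)).comp_ofReal
  push_cast at h
  simpa using h

theorem hasDerivAt_cos_mul_sin_pow_succ (m : ℕ) (t : ℝ) :
    HasDerivAt (fun t : ℝ => cos (t : ℂ) * sin (t : ℂ) ^ (m + 1))
      ((m + 1) * sin (t : ℂ) ^ m - (m + 2) * sin (t : ℂ) ^ (m + 2)) t := by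
  refine (((hasDerivAt_cos (t : ℂ)).comp_ofReal).mul (hasDerivAt_sin_pow_succ m t)).congr_deriv ?_
  linear_combination ((m : ℂ) + 1) * sin (t : ℂ) ^ m * sin_sq_add_cos_sq (t : ℂ)

theorem norm_cos_ofReal_le_one (t : ℝ) : ‖cos (t : ℂ)‖ ≤ 1 := by
  rw [← ofReal_cos, norm_real, Real.norm_eq_abs]
  exact Real.abs_cos_le_one t

variable {c : ℕ → ℂ} {C : ℝ}

theorem norm_mul_natCast_le (hC : ∀ n, ‖c n‖ ≤ C) (k m : ℕ) : ‖c k * (m : ℂ)‖ ≤ C * m := by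
  rw [norm_mul, Complex.norm_natCast]
  exact mul_le_mul_of_nonneg_right (hC k) m.cast_nonneg

theorem summable_mul_sin_pow {b : ℕ → ℂ} {B : ℝ} (hb : ∀ n, ‖b n‖ ≤ B * ((n : ℝ) + 1))
    (hr : r < Real.pi / 2) (ht : t ∈ Ioo (-r) r) {m : ℕ → ℕ} (hm : ∀ n, n ≤ m n) :
    Summable fun n => b n * sin (t : ℂ) ^ m n := by
  obtain ⟨hq0, hq1⟩ := sin_nonneg_lt_one_of_mem_Ioo hr ht
  exact (summable_mul_succ_mul_geometric hq0 hq1 B).of_norm_bounded fun n =>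
    norm_mul_sin_pow_le (hb n) hr ht (hm n)

theorem summable_cos_mul_sin_pow (hC : ∀ n, ‖c n‖ ≤ C) (hr : r < Real.pi / 2)
    (ht : t ∈ Ioo (-r) r) : Summable fun n => c n * cos (t : ℂ) * sin (t : ℂ) ^ (2 * n) := by
  have hC0 : 0 ≤ C := (norm_nonneg _).trans (hC 0)
  refine summable_mul_sin_pow (B := C) (fun n => ?_) hr ht (fun n => by omega)
  rw [norm_mul]
  nlinarith [norm_nonneg (c n), hC n, norm_cos_ofReal_le_one t, (n.cast_nonneg : (0 : ℝ) ≤ n)]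

theorem tsum_sub_tsum_succ {G : Type*} [AddCommGroup G] [TopologicalSpace G]
    [IsTopologicalAddGroup G] [T2Space G] {P Q : ℕ → G} (hP : Summable P) (hQ : Summable Q) :
    ∑' n, (P n - Q (n + 1)) - Q 0 = ∑' n, (P n - Q n) := by
  rw [hP.tsum_sub hQ, hP.tsum_sub ((summable_nat_add_iff 1).mpr hQ), hQ.tsum_eq_zero_add]
  abel

theorem hasDerivAt_tsum_cos_mul_sin_pow_succ (hC : ∀ n, ‖c n‖ ≤ C) (hr : r < Real.pi / 2)
    (ht : t ∈ Ioo (-r) r) :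
    HasDerivAt (fun s : ℝ => ∑' n, c (n + 1) * (cos (s : ℂ) * sin (s : ℂ) ^ (2 * n + 2)))
      (∑' n, (c (n + 1) * (2 * n + 2 : ℕ) * sin (t : ℂ) ^ (2 * n + 1) -
        c (n + 1) * (2 * n + 3 : ℕ) * sin (t : ℂ) ^ (2 * n + 3))) t := by
  obtain ⟨hq0, hq1⟩ := sin_nonneg_lt_one_of_mem_Ioo hr ht
  refine hasDerivAt_tsum_of_isPreconnected
    (g := fun n (s : ℝ) => c (n + 1) * (cos (s : ℂ) * sin (s : ℂ) ^ (2 * n + 2)))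
    (g' := fun n (s : ℝ) => c (n + 1) * (2 * n + 2 : ℕ) * sin (s : ℂ) ^ (2 * n + 1) -
      c (n + 1) * (2 * n + 3 : ℕ) * sin (s : ℂ) ^ (2 * n + 3))
    (u := fun n : ℕ => 5 * C * ((n : ℝ) + 1) * Real.sin r ^ n)
    (summable_mul_succ_mul_geometric hq0 hq1 _) isOpen_Ioo isPreconnected_Ioo
    (fun n s _ => ((hasDerivAt_cos_mul_sin_pow_succ (2 * n + 1) s).const_mul _).congr_deriv ?_)
    (fun n s hs => ?_) ht ?_ ht
  · push_cast
    ring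
  · refine (norm_sub_le _ _).trans ?_
    have h1 := norm_mul_sin_pow_le (norm_mul_natCast_le hC (n + 1) (2 * n + 2)) hr hs
      (by omega : n ≤ 2 * n + 1)
    have h2 := norm_mul_sin_pow_le (norm_mul_natCast_le hC (n + 1) (2 * n + 3)) hr hs
      (by omega : n ≤ 2 * n + 3)
    have hCq := mul_nonneg ((norm_nonneg _).trans (hC 0)) (pow_nonneg hq0 n)
    push_cast at h1 h2 ⊢
    nlinarith
  · exact ((summable_nat_add_iff 1).mpr (summable_cos_mul_sin_pow hC hr ht)).congr fun n => by
      ring_nf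

theorem hasDerivAt_tsum_cos_mul_sin_pow (hC : ∀ n, ‖c n‖ ≤ C) (hr : r < Real.pi / 2)
    (ht : t ∈ Ioo (-r) r) :
    HasDerivAt (fun s : ℝ => ∑' n, c n * cos (s : ℂ) * sin (s : ℂ) ^ (2 * n))
      (∑' n, (c (n + 1) * (2 * n + 2 : ℕ) - c n * (2 * n + 1 : ℕ)) * sin (t : ℂ) ^ (2 * n + 1))
      t := by
  -- Splitting off `c 0 * cos s` leaves positive powers of `sin` only, so no exponent `2n - 1`.
  have hsplit : ∀ s ∈ Ioo (-r) r, ∑' n, c n * cos (s : ℂ) * sin (s : ℂ) ^ (2 * n) =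
      c 0 * cos (s : ℂ) + ∑' n, c (n + 1) * (cos (s : ℂ) * sin (s : ℂ) ^ (2 * n + 2)) :=
    fun s hs => by
      rw [(summable_cos_mul_sin_pow hC hr hs).tsum_eq_zero_add]
      simp only [mul_zero, pow_zero, mul_one, ← mul_assoc]
      congr 2 with n
  refine ((((hasDerivAt_cos (t : ℂ)).comp_ofReal).const_mul (c 0)).add
    (hasDerivAt_tsum_cos_mul_sin_pow_succ hC hr ht)).congr_of_eventuallyEq
    (Filter.eventually_of_mem (isOpen_Ioo.mem_nhds ht) hsplit) |>.congr_deriv ?_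
  have hC0 : 0 ≤ C := (norm_nonneg _).trans (hC 0)
  set P : ℕ → ℂ := fun n => c (n + 1) * (2 * n + 2 : ℕ) * sin (t : ℂ) ^ (2 * n + 1)
  set Q : ℕ → ℂ := fun n => c n * (2 * n + 1 : ℕ) * sin (t : ℂ) ^ (2 * n + 1)
  have hP : Summable P := summable_mul_sin_pow (B := 2 * C) (fun n =>
    (norm_mul_natCast_le hC _ _).trans_eq (by push_cast; ring)) hr ht (by omega)
  have hQ : Summable Q := summable_mul_sin_pow (B := 2 * C) (fun n =>
    (norm_mul_natCast_le hC _ _).trans (by push_cast; nlinarith)) hr ht (by omega)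
  calc c 0 * -sin (t : ℂ) + ∑' n, (P n - c (n + 1) * (2 * n + 3 : ℕ) * sin (t : ℂ) ^ (2 * n + 3))
      = ∑' n, (P n - Q (n + 1)) - Q 0 := by
        simp only [Q]
        push_cast
        ring_nf
    _ = ∑' n, (P n - Q n) := tsum_sub_tsum_succ hP hQ
    _ = _ := tsum_congr fun n => by simp only [P, Q]; ring

theorem hasDerivAt_tsum_sin_pow {K : ℂ}
    (hc : ∀ n : ℕ, c (n + 1) * ((2 * n + 2) * (2 * n + 1)) = c n * ((2 * n + 1) ^ 2 - K ^ 2))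
    (hC : ∀ n, ‖c n‖ ≤ C) (hr : r < Real.pi / 2) (ht : t ∈ Ioo (-r) r) :
    HasDerivAt
      (fun s : ℝ => ∑' n, (c (n + 1) * (2 * n + 2 : ℕ) - c n * (2 * n + 1 : ℕ)) *
        sin (s : ℂ) ^ (2 * n + 1))
      (-K ^ 2 * ∑' n, c n * cos (t : ℂ) * sin (t : ℂ) ^ (2 * n)) t := by
  obtain ⟨hq0, hq1⟩ := sin_nonneg_lt_one_of_mem_Ioo hr ht
  have hC0 : 0 ≤ C := (norm_nonneg _).trans (hC 0)
  rw [← tsum_mul_left]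
  refine hasDerivAt_tsum_of_isPreconnected
    (g' := fun n (s : ℝ) => -K ^ 2 * (c n * cos (s : ℂ) * sin (s : ℂ) ^ (2 * n)))
    (u := fun n : ℕ => ‖K‖ ^ 2 * C * ((n : ℝ) + 1) * Real.sin r ^ n)
    (summable_mul_succ_mul_geometric hq0 hq1 _) isOpen_Ioo isPreconnected_Ioo
    (fun n s _ => ((hasDerivAt_sin_pow_succ (2 * n) s).const_mul _).congr_deriv ?_)
    (fun n s hs => ?_) ht (summable_mul_sin_pow (B := 4 * C) (fun n => ?_) hr ht (by omega)) ht
  · push_cast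
    linear_combination cos (s : ℂ) * sin (s : ℂ) ^ (2 * n) * hc n
  · have hb : ‖-K ^ 2 * (c n * cos (s : ℂ))‖ ≤ ‖K‖ ^ 2 * C * ((n : ℝ) + 1) := by
      rw [norm_mul, norm_neg, norm_pow, norm_mul, mul_assoc (‖K‖ ^ 2)]
      gcongr
      · exact hC n
      · linarith [norm_cos_ofReal_le_one s, (n.cast_nonneg : (0 : ℝ) ≤ n)]
    simpa only [mul_assoc] using norm_mul_sin_pow_le hb hr hs (by omega : n ≤ 2 * n)
  · refine (norm_sub_le _ _).trans ?_
    have h1 := norm_mul_natCast_le hC (n + 1) (2 * n + 2)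
    have h2 := norm_mul_natCast_le hC n (2 * n + 1)
    push_cast at h1 h2 ⊢
    nlinarith

theorem hasSum_mul_sin_sq_pow {K : ℂ}
    (hc : ∀ n : ℕ, c (n + 1) * ((2 * n + 2) * (2 * n + 1)) = c n * ((2 * n + 1) ^ 2 - K ^ 2))
    {θ : ℝ} (hθ : |θ| < Real.pi / 2) :
    HasSum (fun n => c n * (sin (θ : ℂ) ^ 2) ^ n) (c 0 * cos (K * θ) / cos (θ : ℂ)) := by
  obtain ⟨C, hC⟩ := exists_norm_le_of_succ_mul_eq hc
  obtain ⟨r, hθr, hr⟩ := exists_between hθ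
  have h0 : (0 : ℝ) ∈ Ioo (-r) r := ⟨by linarith [abs_nonneg θ], by linarith [abs_nonneg θ]⟩
  replace hθr : θ ∈ Ioo (-r) r := abs_lt.mp hθr
  have hH := isOpen_Ioo.eqOn_mul_cos_of_hasDerivAt isPreconnected_Ioo h0
    (fun x hx => hasDerivAt_tsum_cos_mul_sin_pow hC hr hx)
    (fun x hx => hasDerivAt_tsum_sin_pow hc hC hr hx) (by simp) hθr
  have hH0 : ∑' n, c n * cos ((0 : ℝ) : ℂ) * sin ((0 : ℝ) : ℂ) ^ (2 * n) = c 0 := by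
    rw [tsum_eq_single 0 fun n hn => by simp [hn]]
    simp
  have hcos : cos (θ : ℂ) ≠ 0 := by
    rw [← ofReal_cos]
    exact ofReal_ne_zero.mpr (Real.cos_pos_of_mem_Ioo (abs_lt.mp hθ)).ne'
  have hsum := ((summable_cos_mul_sin_pow hC hr hθr).hasSum.div_const (cos (θ : ℂ)))
  beta_reduce at hH
  rw [hH, hH0] at hsum
  have hterm : ∀ n, c n * cos (θ : ℂ) * sin (θ : ℂ) ^ (2 * n) / cos (θ : ℂ) =
      c n * (sin (θ : ℂ) ^ 2) ^ n := fun n => by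
    rw [← pow_mul]
    field_simp
  simpa only [hterm] using hsum

theorem hasSum_gaussHypTerm_sin_sq (a : ℂ) {θ : ℝ} (hθ : |θ| < Real.pi / 2) :
    HasSum (gaussHypTerm a (1 - a) (1 / 2) (sin (θ : ℂ) ^ 2))
      (cos ((2 * a - 1) * θ) / cos (θ : ℂ)) := by
  have hhalf : ∀ k : ℕ, (1 / 2 : ℂ) + k ≠ 0 := fun k => by
    norm_num [Complex.ext_iff]
    positivity
  have h := hasSum_mul_sin_sq_pow (c := gaussHypTerm a (1 - a) (1 / 2) 1) (K := 2 * a - 1)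
    (fun n => by linear_combination 4 * gaussHypTerm_succ_mul (a := a) (b := 1 - a) hhalf 1 n) hθ
  have hc0 : gaussHypTerm a (1 - a) (1 / 2) 1 0 = 1 := by simp [gaussHypTerm]
  simpa only [hc0, one_mul, ← gaussHypTerm_eq_mul_pow] using h

/-- For every complex `a`, `F(a, 1 - a; 1/2; 3/4) = 2 sin((4a + 1)π/6)`. -/
theorem hyp_value_three_quarters'' (a : ℂ) :
    HasSum (gaussHypTerm a (1 - a) (1 / 2) (3 / 4))
      (2 * Complex.sin ((4 * a + 1) * (Real.pi : ℂ) / 6)) := by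
  have h := hasSum_gaussHypTerm_sin_sq a (θ := Real.pi / 3)
    (by rw [abs_of_pos (by positivity)]; linarith [Real.pi_pos])
  have hsin : sin ((Real.pi / 3 : ℝ) : ℂ) ^ 2 = 3 / 4 := by
    rw [← ofReal_sin, Real.sin_pi_div_three, ← ofReal_pow, div_pow,
      Real.sq_sqrt (by norm_num : (0 : ℝ) ≤ 3)]
    norm_num
  have hcos : cos ((Real.pi / 3 : ℝ) : ℂ) = 1 / 2 := by
    rw [← ofReal_cos, Real.cos_pi_div_three]
    norm_num
  rw [hsin, hcos] at h
  convert h using 1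
  rw [show (4 * a + 1) * (Real.pi : ℂ) / 6 = (2 * a - 1) * (Real.pi / 3 : ℝ) + Real.pi / 2 by
    push_cast; ring, sin_add_pi_div_two]
  ring
end

section
/- Let σ₁, σ₂, σ₃, σ₄, σ₅ : ℤ³ → ℤ³ be the maps σ₁(k,l,m) = (m−k, l, m), σ₂(k,l,m) = (k, l, k+l−m), σ₃(k,l,m) = (l, k, m), σ₄(k,l,m) = (m−k, m−l, m), σ₅(k,l,m) = (−k, −l, −m), and let G be the group of bijections of ℤ³ generated by σ₁, …, σ₅. Then for every (k, l, m) ∈ ℤ³ there exists an element g ∈ G such that g(k, l, m) = (k', l', m') satisfies 0 ≤ k' + l' − m' ≤ l' − k' ≤ m'; that is, the set {(k,l,m) ∈ ℤ³ : 0 ≤ k+l−m ≤ l−k ≤ m} meets every orbit of the action of G on ℤ³. -/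
/-- The map `σ₁ : (k, l, m) ↦ (m - k, l, m)` on `ℤ³`, as a permutation. -/
def sigma1 : Equiv.Perm (ℤ × ℤ × ℤ) where
  toFun := fun p => (p.2.2 - p.1, p.2.1, p.2.2)
  invFun := fun p => (p.2.2 - p.1, p.2.1, p.2.2)
  left_inv := fun p => by obtain ⟨k, l, m⟩ := p; simp [Prod.ext_iff]
  right_inv := fun p => by obtain ⟨k, l, m⟩ := p; simp [Prod.ext_iff]

/-- The map `σ₂ : (k, l, m) ↦ (k, l, k + l - m)` on `ℤ³`, as a permutation. -/
def sigma2 : Equiv.Perm (ℤ × ℤ × ℤ) where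
  toFun := fun p => (p.1, p.2.1, p.1 + p.2.1 - p.2.2)
  invFun := fun p => (p.1, p.2.1, p.1 + p.2.1 - p.2.2)
  left_inv := fun p => by obtain ⟨k, l, m⟩ := p; simp [Prod.ext_iff]
  right_inv := fun p => by obtain ⟨k, l, m⟩ := p; simp [Prod.ext_iff]

/-- The map `σ₃ : (k, l, m) ↦ (l, k, m)` on `ℤ³`, as a permutation. -/
def sigma3 : Equiv.Perm (ℤ × ℤ × ℤ) where
  toFun := fun p => (p.2.1, p.1, p.2.2)
  invFun := fun p => (p.2.1, p.1, p.2.2)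
  left_inv := fun p => by obtain ⟨k, l, m⟩ := p; simp
  right_inv := fun p => by obtain ⟨k, l, m⟩ := p; simp

/-- The map `σ₄ : (k, l, m) ↦ (m - k, m - l, m)` on `ℤ³`, as a permutation. -/
def sigma4 : Equiv.Perm (ℤ × ℤ × ℤ) where
  toFun := fun p => (p.2.2 - p.1, p.2.2 - p.2.1, p.2.2)
  invFun := fun p => (p.2.2 - p.1, p.2.2 - p.2.1, p.2.2)
  left_inv := fun p => by obtain ⟨k, l, m⟩ := p; simp [Prod.ext_iff]
  right_inv := fun p => by obtain ⟨k, l, m⟩ := p; simp [Prod.ext_iff]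

/-- The map `σ₅ : (k, l, m) ↦ (-k, -l, -m)` on `ℤ³`, as a permutation. -/
def sigma5 : Equiv.Perm (ℤ × ℤ × ℤ) where
  toFun := fun p => (-p.1, -p.2.1, -p.2.2)
  invFun := fun p => (-p.1, -p.2.1, -p.2.2)
  left_inv := fun p => by obtain ⟨k, l, m⟩ := p; simp
  right_inv := fun p => by obtain ⟨k, l, m⟩ := p; simp

namespace OrbitAux

abbrev H : Subgroup (Equiv.Perm (ℤ × ℤ × ℤ)) :=
  Subgroup.closure ({sigma1, sigma2, sigma3, sigma4, sigma5} : Set (Equiv.Perm (ℤ × ℤ × ℤ)))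

lemma h1 : sigma1 ∈ H := Subgroup.subset_closure (by simp)
lemma h2 : sigma2 ∈ H := Subgroup.subset_closure (by simp)
lemma h3 : sigma3 ∈ H := Subgroup.subset_closure (by simp)
lemma h4 : sigma4 ∈ H := Subgroup.subset_closure (by simp)
lemma h5 : sigma5 ∈ H := Subgroup.subset_closure (by simp)

/-- Step 1: make all of `k+l-m`, `l-k`, `m` nonnegative. -/
lemma step1 (v : ℤ × ℤ × ℤ) :
    ∃ g ∈ H, 0 ≤ (g v).1 + (g v).2.1 - (g v).2.2 ∧ 0 ≤ (g v).2.1 - (g v).1 ∧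
      0 ≤ (g v).2.2 := by
  obtain ⟨k, l, m⟩ := v
  rcases le_or_gt 0 (k + l - m) with ha | ha <;>
  rcases le_or_gt 0 (l - k) with hb | hb <;>
  rcases le_or_gt 0 m with hc | hc
  · exact ⟨1, one_mem _, by simp; omega⟩
  · exact ⟨sigma5 * sigma4, mul_mem h5 h4,
      by simp [Equiv.Perm.mul_apply, sigma4, sigma5]; omega⟩
  · exact ⟨sigma3, h3, by simp [sigma3]; omega⟩
  · exact ⟨sigma3 * sigma5 * sigma4, mul_mem (mul_mem h3 h5) h4,
      by simp [Equiv.Perm.mul_apply, sigma3, sigma4, sigma5]; omega⟩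
  · exact ⟨sigma4 * sigma3, mul_mem h4 h3,
      by simp [Equiv.Perm.mul_apply, sigma3, sigma4]; omega⟩
  · exact ⟨sigma4 * sigma3 * sigma5 * sigma4, mul_mem (mul_mem (mul_mem h4 h3) h5) h4,
      by simp [Equiv.Perm.mul_apply, sigma3, sigma4, sigma5]; omega⟩
  · exact ⟨sigma4, h4, by simp [sigma4]; omega⟩
  · exact ⟨sigma5, h5, by simp [sigma5]; omega⟩

/-- Step 2: sort the three nonnegative quantities. -/
lemma step2 (v : ℤ × ℤ × ℤ)
    (ha : 0 ≤ v.1 + v.2.1 - v.2.2) (hb : 0 ≤ v.2.1 - v.1) (hc : 0 ≤ v.2.2) :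
    ∃ g ∈ H, 0 ≤ (g v).1 + (g v).2.1 - (g v).2.2 ∧
      (g v).1 + (g v).2.1 - (g v).2.2 ≤ (g v).2.1 - (g v).1 ∧
      (g v).2.1 - (g v).1 ≤ (g v).2.2 := by
  obtain ⟨k, l, m⟩ := v
  simp only at ha hb hc
  rcases le_total (k + l - m) (l - k) with hab | hab <;>
  rcases le_total (k + l - m) m with hac | hac <;>
  rcases le_total (l - k) m with hbc | hbc
  -- a ≤ b, a ≤ c, b ≤ c : identity
  · exact ⟨1, one_mem _, by simp; omega⟩
  -- a ≤ b, a ≤ c, c ≤ b : swap b,c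
  · exact ⟨sigma1 * sigma2 * sigma1, mul_mem (mul_mem h1 h2) h1,
      by simp [Equiv.Perm.mul_apply, sigma1, sigma2]; omega⟩
  -- a ≤ b, c ≤ a, b ≤ c : degenerate (a = b = c)
  · exact ⟨1, one_mem _, by simp; omega⟩
  -- a ≤ b, c ≤ a (so c ≤ a ≤ b) : need (c,a,b)
  · exact ⟨sigma1 * (sigma1 * sigma2 * sigma1), mul_mem h1 (mul_mem (mul_mem h1 h2) h1),
      by simp [Equiv.Perm.mul_apply, sigma1, sigma2]; omega⟩
  -- b ≤ a, a ≤ c : swap a,b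
  · exact ⟨sigma1, h1, by simp [sigma1]; omega⟩
  · exact ⟨sigma1, h1, by simp [sigma1]; omega⟩
  -- b ≤ a, c ≤ a, b ≤ c (so b ≤ c ≤ a) : need (b,c,a)
  · exact ⟨(sigma1 * sigma2 * sigma1) * sigma1, mul_mem (mul_mem (mul_mem h1 h2) h1) h1,
      by simp [Equiv.Perm.mul_apply, sigma1, sigma2]; omega⟩
  -- c ≤ b ≤ a : swap a,c
  · exact ⟨sigma2, h2, by simp [sigma2]; omega⟩

end OrbitAux

/-- Every orbit of the group generated by `σ₁, …, σ₅` acting on `ℤ³` meets the set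
`{(k, l, m) : 0 ≤ k + l - m ≤ l - k ≤ m}`. -/
theorem orbit_meets_fundamental_domain (v : ℤ × ℤ × ℤ) :
    ∃ g ∈ Subgroup.closure
        ({sigma1, sigma2, sigma3, sigma4, sigma5} : Set (Equiv.Perm (ℤ × ℤ × ℤ))),
      0 ≤ (g v).1 + (g v).2.1 - (g v).2.2 ∧
        (g v).1 + (g v).2.1 - (g v).2.2 ≤ (g v).2.1 - (g v).1 ∧
        (g v).2.1 - (g v).1 ≤ (g v).2.2 := by
  obtain ⟨g1, hg1, ha, hb, hc⟩ := OrbitAux.step1 v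
  obtain ⟨g2, hg2, h⟩ := OrbitAux.step2 (g1 v) ha hb hc
  exact ⟨g2 * g1, mul_mem hg2 hg1, by simpa [Equiv.Perm.mul_apply] using h⟩
end
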